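/- For a multiplicative n-Hom Lie superalgebra N, C(N)·Der(N) ⊆ Der(N): if D is a homogeneous α^k-centroid element of degree ξ and E a homogeneous α^s-derivation of degree η, then the composition DE is an α^{k+s}-derivation of degree ξ+η. -/
import Mathlib


open scoped BigOperators

noncomputable section

variable {𝔽 : Type*} [Field 𝔽]
variable {N : Type*} [AddCommGroup N] [Module 𝔽 N]

/-- The sign `(-1)^g` for `g : ZMod 2`. -/
def sgn (𝔽 : Type*) [Field 𝔽] (g : ZMod 2) : 𝔽 := if g = 0 then 1 else -1

/-- `|X_{i-1}|` : the sum of the degrees `d j` for `j < i`. -/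
def psum {m : ℕ} (d : Fin m → ZMod 2) (i : Fin m) : ZMod 2 :=
  ∑ j ∈ Finset.univ.filter (fun j => j < i), d j

/-- `D` is homogeneous of degree `ξ` with respect to the `ℤ₂`-grading `gr`. -/
def Homog (gr : ZMod 2 → Submodule 𝔽 N) (ξ : ZMod 2) (D : N →ₗ[𝔽] N) : Prop :=
  ∀ g : ZMod 2, ∀ x ∈ gr g, D x ∈ gr (g + ξ)

/-- `(N, br, α)` is a multiplicative `n`-Hom Lie superalgebra, where `n = m + 1`:
`N = N₀ ⊕ N₁` is `ℤ₂`-graded, the `n`-multilinear bracket `br` is even (adds degrees),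
super skew-symmetric in adjacent arguments, `α` is even, multiplicative, and the super
Hom-Jacobi identity holds. -/
structure IsMNHLS {m : ℕ} (gr : ZMod 2 → Submodule 𝔽 N)
    (br : MultilinearMap 𝔽 (fun _ : Fin (m + 1) => N) N) (α : N →ₗ[𝔽] N) : Prop where
  internal : DirectSum.IsInternal gr
  alpha_even : ∀ g : ZMod 2, ∀ x ∈ gr g, α x ∈ gr g
  br_deg : ∀ (d : Fin (m + 1) → ZMod 2) (x : Fin (m + 1) → N),
      (∀ i, x i ∈ gr (d i)) → br x ∈ gr (∑ i, d i)
  skew : ∀ (d : Fin (m + 1) → ZMod 2) (x : Fin (m + 1) → N),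
      (∀ i, x i ∈ gr (d i)) → ∀ i j : Fin (m + 1), (i : ℕ) + 1 = (j : ℕ) →
      br x = -sgn 𝔽 (d i * d j) • br (x ∘ Equiv.swap i j)
  alpha_br : ∀ x : Fin (m + 1) → N, α (br x) = br fun i => α (x i)
  jacobi : ∀ (dx : Fin m → ZMod 2) (x : Fin m → N)
      (dy : Fin (m + 1) → ZMod 2) (y : Fin (m + 1) → N),
      (∀ i, x i ∈ gr (dx i)) → (∀ i, y i ∈ gr (dy i)) →
      br (Fin.snoc (fun i => α (x i)) (br y)) =
        ∑ i : Fin (m + 1), sgn 𝔽 ((∑ j, dx j) * psum dy i) •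
          br (Function.update (fun j => α (y j)) i (br (Fin.snoc x (y i))))

/-- `D` is a homogeneous `α^k`-derivation of degree `ξ`. -/
def IsDer {m : ℕ} (gr : ZMod 2 → Submodule 𝔽 N)
    (br : MultilinearMap 𝔽 (fun _ : Fin (m + 1) => N) N) (α : N →ₗ[𝔽] N)
    (k : ℕ) (ξ : ZMod 2) (D : N →ₗ[𝔽] N) : Prop :=
  Homog gr ξ D ∧ D ∘ₗ α = α ∘ₗ D ∧
    ∀ (d : Fin (m + 1) → ZMod 2) (x : Fin (m + 1) → N), (∀ i, x i ∈ gr (d i)) →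
      D (br x) = ∑ i : Fin (m + 1), sgn 𝔽 (ξ * psum d i) •
        br (Function.update (fun j => (α ^ k) (x j)) i (D (x i)))

/-- `D` is a homogeneous `α^k`-quasiderivation of degree `ξ` with associated map `D'`. -/
def IsQDerWith {m : ℕ} (gr : ZMod 2 → Submodule 𝔽 N)
    (br : MultilinearMap 𝔽 (fun _ : Fin (m + 1) => N) N) (α : N →ₗ[𝔽] N)
    (k : ℕ) (ξ : ZMod 2) (D D' : N →ₗ[𝔽] N) : Prop :=
  Homog gr ξ D ∧ D ∘ₗ α = α ∘ₗ D ∧ Homog gr ξ D' ∧ D' ∘ₗ α = α ∘ₗ D' ∧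
    ∀ (d : Fin (m + 1) → ZMod 2) (x : Fin (m + 1) → N), (∀ i, x i ∈ gr (d i)) →
      (∑ i : Fin (m + 1), sgn 𝔽 (ξ * psum d i) •
        br (Function.update (fun j => (α ^ k) (x j)) i (D (x i)))) = D' (br x)

/-- `D` is a homogeneous `α^k`-quasiderivation of degree `ξ`. -/
def IsQDer {m : ℕ} (gr : ZMod 2 → Submodule 𝔽 N)
    (br : MultilinearMap 𝔽 (fun _ : Fin (m + 1) => N) N) (α : N →ₗ[𝔽] N)
    (k : ℕ) (ξ : ZMod 2) (D : N →ₗ[𝔽] N) : Prop :=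
  ∃ D' : N →ₗ[𝔽] N, IsQDerWith gr br α k ξ D D'

/-- `D` is a homogeneous generalized `α^k`-derivation of degree `ξ`:
there are `D⁽¹⁾, …, D⁽ⁿ⁾` (here `DD i` for positions `i = 1, …, n-1`, with `DD 0 = D`,
and `Dn = D⁽ⁿ⁾`) all homogeneous of degree `ξ` and commuting with `α`, satisfying the
defining identity. -/
def IsGDer {m : ℕ} (gr : ZMod 2 → Submodule 𝔽 N)
    (br : MultilinearMap 𝔽 (fun _ : Fin (m + 1) => N) N) (α : N →ₗ[𝔽] N)
    (k : ℕ) (ξ : ZMod 2) (D : N →ₗ[𝔽] N) : Prop :=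
  Homog gr ξ D ∧ D ∘ₗ α = α ∘ₗ D ∧
    ∃ (DD : Fin (m + 1) → (N →ₗ[𝔽] N)) (Dn : N →ₗ[𝔽] N),
      DD 0 = D ∧ (∀ i, Homog gr ξ (DD i)) ∧ (∀ i, DD i ∘ₗ α = α ∘ₗ DD i) ∧
      Homog gr ξ Dn ∧ Dn ∘ₗ α = α ∘ₗ Dn ∧
      ∀ (d : Fin (m + 1) → ZMod 2) (x : Fin (m + 1) → N), (∀ i, x i ∈ gr (d i)) →
        (∑ i : Fin (m + 1), sgn 𝔽 (ξ * psum d i) •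
          br (Function.update (fun j => (α ^ k) (x j)) i (DD i (x i)))) = Dn (br x)

/-- `D` is a homogeneous `α^k`-centroid element of degree `ξ`. -/
def IsCent {m : ℕ} (gr : ZMod 2 → Submodule 𝔽 N)
    (br : MultilinearMap 𝔽 (fun _ : Fin (m + 1) => N) N) (α : N →ₗ[𝔽] N)
    (k : ℕ) (ξ : ZMod 2) (D : N →ₗ[𝔽] N) : Prop :=
  Homog gr ξ D ∧ D ∘ₗ α = α ∘ₗ D ∧
    ∀ (d : Fin (m + 1) → ZMod 2) (x : Fin (m + 1) → N), (∀ i, x i ∈ gr (d i)) →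
      (∀ i : Fin (m + 1),
        br (Function.update (fun j => (α ^ k) (x j)) 0 (D (x 0))) =
          sgn 𝔽 (ξ * psum d i) •
            br (Function.update (fun j => (α ^ k) (x j)) i (D (x i)))) ∧
      br (Function.update (fun j => (α ^ k) (x j)) 0 (D (x 0))) = D (br x)

/-- `D` is a homogeneous `α^k`-quasicentroid element of degree `ξ`. -/
def IsQCent {m : ℕ} (gr : ZMod 2 → Submodule 𝔽 N)
    (br : MultilinearMap 𝔽 (fun _ : Fin (m + 1) => N) N) (α : N →ₗ[𝔽] N)
    (k : ℕ) (ξ : ZMod 2) (D : N →ₗ[𝔽] N) : Prop :=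
  Homog gr ξ D ∧ D ∘ₗ α = α ∘ₗ D ∧
    ∀ (d : Fin (m + 1) → ZMod 2) (x : Fin (m + 1) → N), (∀ i, x i ∈ gr (d i)) →
      ∀ i : Fin (m + 1),
        br (Function.update (fun j => (α ^ k) (x j)) 0 (D (x 0))) =
          sgn 𝔽 (ξ * psum d i) •
            br (Function.update (fun j => (α ^ k) (x j)) i (D (x i)))

/-- `D` is a homogeneous `α^k`-center derivation of degree `ξ`. -/
def IsZDer {m : ℕ} (gr : ZMod 2 → Submodule 𝔽 N)
    (br : MultilinearMap 𝔽 (fun _ : Fin (m + 1) => N) N) (α : N →ₗ[𝔽] N)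
    (k : ℕ) (ξ : ZMod 2) (D : N →ₗ[𝔽] N) : Prop :=
  Homog gr ξ D ∧ D ∘ₗ α = α ∘ₗ D ∧
    ∀ (d : Fin (m + 1) → ZMod 2) (x : Fin (m + 1) → N), (∀ i, x i ∈ gr (d i)) →
      br (Function.update (fun j => (α ^ k) (x j)) 0 (D (x 0))) = 0 ∧ D (br x) = 0

/-- The center `Z(N) = {x : [x, y₂, …, yₙ] = 0}`. -/
def center {m : ℕ} (br : MultilinearMap 𝔽 (fun _ : Fin (m + 1) => N) N) :
    Submodule 𝔽 N where
  carrier := {x | ∀ y : Fin (m + 1) → N, br (Function.update y 0 x) = 0}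
  add_mem' := by
    intro a b ha hb y
    rw [MultilinearMap.map_update_add, ha y, hb y, add_zero]
  zero_mem' := by
    intro y
    exact br.map_update_zero y 0
  smul_mem' := by
    intro c a ha y
    rw [MultilinearMap.map_update_smul, ha y, smul_zero]

/-- The Jordan product `D • E = ½(DE + (-1)^{|D||E|} ED)` of operators of degrees `ξ, η`. -/
def jprod (𝔽 : Type*) [Field 𝔽] {N : Type*} [AddCommGroup N] [Module 𝔽 N]
    (ξ η : ZMod 2) (D E : N →ₗ[𝔽] N) : N →ₗ[𝔽] N :=
  (2 : 𝔽)⁻¹ • (D ∘ₗ E + sgn 𝔽 (ξ * η) • (E ∘ₗ D))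

/-- The Hom-associator of the Jordan product with respect to `α̃(u) = α ∘ u`, where
`x, y, z` have degrees `a, b, c`. -/
def jassoc (𝔽 : Type*) [Field 𝔽] {N : Type*} [AddCommGroup N] [Module 𝔽 N]
    (α : N →ₗ[𝔽] N) (a b c : ZMod 2) (x y z : N →ₗ[𝔽] N) : N →ₗ[𝔽] N :=
  jprod 𝔽 (a + b) c (jprod 𝔽 a b x y) (α ∘ₗ z) -
    jprod 𝔽 a (b + c) (α ∘ₗ x) (jprod 𝔽 b c y z)

/-- The bracket subalgebra `[N, …, N]`, the span of all brackets. -/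
def brSub {m : ℕ} (br : MultilinearMap 𝔽 (fun _ : Fin (m + 1) => N) N) :
    Submodule 𝔽 N :=
  Submodule.span 𝔽 (Set.range fun x : Fin (m + 1) → N => br x)

/-- The bracket of `Ň = Nt + Ntⁿ` (modelled as `N × N`, first coordinate the coefficient
of `t`, second the coefficient of `tⁿ`): `[x₁t, …, xₙt] = [x₁, …, xₙ]tⁿ` and every bracket
involving a `tⁿ`-term vanishes. -/
def checkBr {m : ℕ} (br : MultilinearMap 𝔽 (fun _ : Fin (m + 1) => N) N) :
    MultilinearMap 𝔽 (fun _ : Fin (m + 1) => N × N) (N × N) :=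
  (LinearMap.inr 𝔽 N N).compMultilinearMap
    (br.compLinearMap fun _ => LinearMap.fst 𝔽 N N)

/-- The grading of `Ň = Nt + Ntⁿ`. -/
def checkGr (gr : ZMod 2 → Submodule 𝔽 N) (g : ZMod 2) : Submodule 𝔽 (N × N) :=
  (gr g).prod (gr g)

/-- The map `φ(D) : Ň → Ň`, `φ(D)(at + utⁿ + btⁿ) = D(a)t + D'(b)tⁿ`, where `π` is the
projection of `N` onto `[N, …, N]` along `U`. -/
def phiMap (D D' π : N →ₗ[𝔽] N) : N × N →ₗ[𝔽] N × N :=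
  LinearMap.prodMap D (D' ∘ₗ π)


lemma sgn_add' (𝔽 : Type*) [Field 𝔽] (a b : ZMod 2) :
    sgn 𝔽 (a + b) = sgn 𝔽 a * sgn 𝔽 b := by
  have h : ∀ c : ZMod 2, c = 0 ∨ c = 1 := by decide
  rcases h a with ha | ha <;> rcases h b with hb | hb <;> subst ha <;> subst hb <;>
    simp [sgn, show ((1 : ZMod 2) + 1 = 0) from by decide]

lemma psum_update_self {m : ℕ} (d : Fin m → ZMod 2) (i : Fin m)
    (v : ZMod 2) : psum (Function.update d i v) i = psum d i := by
  unfold psum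
  refine Finset.sum_congr rfl fun j hj => ?_
  simp only [Finset.mem_filter] at hj
  rw [Function.update_of_ne (ne_of_lt hj.2)]

lemma alpha_pow_mem {𝔽 : Type*} [Field 𝔽] {N : Type*} [AddCommGroup N] [Module 𝔽 N]
    {gr : ZMod 2 → Submodule 𝔽 N} {α : N →ₗ[𝔽] N}
    (hα : ∀ g : ZMod 2, ∀ x ∈ gr g, α x ∈ gr g) (t : ℕ) (g : ZMod 2) (x : N)
    (hx : x ∈ gr g) : (α ^ t) x ∈ gr g := by
  induction t with
  | zero => simpa using hx
  | succ u ih => rw [pow_succ', Module.End.mul_apply]; exact hα g _ ih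

/-- Proposition 3.2(3): `C(N) · Der(N) ⊆ Der(N)`: the composition of a homogeneous
`α^k`-centroid element of degree `ξ` and a homogeneous `α^s`-derivation of degree `η`
is an `α^{k+s}`-derivation of degree `ξ + η`. -/
theorem cent_comp_der {𝔽 : Type*} [Field 𝔽] [CharZero 𝔽]
    {N : Type*} [AddCommGroup N] [Module 𝔽 N] {m : ℕ} (hm : 1 ≤ m)
    (gr : ZMod 2 → Submodule 𝔽 N) (br : MultilinearMap 𝔽 (fun _ : Fin (m + 1) => N) N)
    (α : N →ₗ[𝔽] N) (H : IsMNHLS gr br α)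
    (k s : ℕ) (ξ η : ZMod 2) (D E : N →ₗ[𝔽] N)
    (hD : IsCent gr br α k ξ D) (hE : IsDer gr br α s η E) :
    IsDer gr br α (k + s) (ξ + η) (D ∘ₗ E) := by
  obtain ⟨hDh, hDα, hDc⟩ := hD
  obtain ⟨hEh, hEα, hEd⟩ := hE
  refine ⟨?_, ?_, ?_⟩
  · intro g x hx
    have := hDh (g + η) (E x) (hEh g x hx)
    rwa [add_assoc, add_comm η ξ] at this
  · ext x
    have h1 := LinearMap.congr_fun hEα x
    have h2 := LinearMap.congr_fun hDα (E x)
    simp only [LinearMap.comp_apply] at h1 h2 ⊢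
    rw [h1, h2]
  · intro d x hx
    rw [LinearMap.comp_apply, hEd d x hx, map_sum]
    refine Finset.sum_congr rfl fun i _ => ?_
    set y : Fin (m + 1) → N := Function.update (fun j => (α ^ s) (x j)) i (E (x i)) with hy
    set d' : Fin (m + 1) → ZMod 2 := Function.update d i (d i + η) with hd'
    have hxy : ∀ j, y j ∈ gr (d' j) := by
      intro j
      by_cases hj : j = i
      · subst hj
        simp only [hy, hd', Function.update_self]
        exact hEh (d j) (x j) (hx j)
      · simp only [hy, hd', Function.update_of_ne hj]
        exact alpha_pow_mem H.alpha_even s (d j) (x j) (hx j)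
    obtain ⟨H1, H2⟩ := hDc d' y hxy
    have key : D (br y) = sgn 𝔽 (ξ * psum d' i) •
        br (Function.update (fun j => (α ^ k) (y j)) i (D (y i))) := by
      rw [← H2, H1 i]
    have hupd : Function.update (fun j => (α ^ k) (y j)) i (D (y i)) =
        Function.update (fun j => (α ^ (k + s)) (x j)) i ((D ∘ₗ E) (x i)) := by
      funext j
      by_cases hj : j = i
      · subst hj
        simp [hy]
      · rw [Function.update_of_ne hj, Function.update_of_ne hj]
        simp only [hy, Function.update_of_ne hj]
        rw [pow_add, Module.End.mul_apply]
    rw [map_smul, key, hupd, psum_update_self, smul_smul, ← sgn_add',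
      ← add_mul, add_comm η ξ]
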